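/- arXiv:1711.04466 — 2 statements merged into one kernel-verified Lean document; each statement's English description precedes it below -/
import Mathlib

section
/- Let Y be a discrete random variable, S a finite set of discrete random variables with Y ∉ S, and M₀ ⊆ S a Markov blanket of Y within S. For 0 < ε < 1, let S^ε be obtained from S by replacing each variable Z ∈ S \ M₀ by its ε-noise perturbation Z^ε (with mutually independent noise, jointly independent of all original variables and of Y). Then MI(S^ε, Y) = MI(S, Y); in particular, M₀ remains a Markov blanket of Y within S^ε, and if M₀ is a Markov boundary of Y within S then M₀ is a Markov boundary of Y within S^ε. -/
/-! Perturbing the coordinates in `N = S \ M₀` applies to the joint pmf the product of the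
kernels `(1 - ε) I + ε q 1ᵀ` on those coordinates. Marginals on sets disjoint from `N` are
unchanged, marginals on sets containing `N` are convolved with the same kernel, and the kernel is
invertible for `ε < 1`. Hence `MI(M₀, Y)` is unchanged, and for `M ⊆ M₀` the factorization
expressing `Y ⊥ S \ M | M` holds after the perturbation iff it held before. The chain rule
`MI(S, Y) = MI(M₀, Y) + CMI(Y, S \ M₀ | M₀)`, whose last term vanishes on both sides, finishes. -/

open scoped BigOperators

noncomputable section

/-- `p` is a probability mass function on the finite type `Ω`. -/
def IsDist {Ω : Type*} [Fintype Ω] (p : Ω → ℝ) : Prop :=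
  (∀ w, 0 ≤ p w) ∧ ∑ w, p w = 1

/-- Total variation distance between two distributions on the same finite type. -/
def tvDist {Ω : Type*} [Fintype Ω] (p q : Ω → ℝ) : ℝ :=
  (∑ w, |p w - q w|) / 2

variable {ι : Type*} [Fintype ι] [DecidableEq ι]
variable {α : ι → Type*} [∀ i, Fintype (α i)] [∀ i, DecidableEq (α i)]

/-- Marginal probability, under joint pmf `p`, of the event that the variables in the
collection `A` take the values prescribed by the configuration `x`. -/
def margProb (p : (∀ i, α i) → ℝ) (A : Finset ι) (x : ∀ i, α i) : ℝ :=
  ∑ w : ∀ i, α i, if ∀ i ∈ A, w i = x i then p w else 0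

/-- Conditional independence of the collections `A` and `B` given the collection `C`:
`f(a, b | c) = f(a | c) f(b | c)` whenever `f(c) > 0` (stated in multiplied-out form). -/
def CondIndep (p : (∀ i, α i) → ℝ) (A B C : Finset ι) : Prop :=
  ∀ x : ∀ i, α i, 0 < margProb p C x →
    margProb p (A ∪ B ∪ C) x * margProb p C x =
      margProb p (A ∪ C) x * margProb p (B ∪ C) x

/-- `M` is a Markov blanket of the variable `y` within the collection `T`. -/
def MarkovBlanket (p : (∀ i, α i) → ℝ) (y : ι) (T M : Finset ι) : Prop :=
  M ⊆ T ∧ CondIndep p {y} (T \ M) M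

/-- `M` is a Markov boundary of `y` within `T`: a Markov blanket no proper subset of
which is a Markov blanket. -/
def MarkovBoundary (p : (∀ i, α i) → ℝ) (y : ι) (T M : Finset ι) : Prop :=
  MarkovBlanket p y T M ∧ ∀ M' ⊂ M, ¬ MarkovBlanket p y T M'

/-- Mutual information between the collections `A` and `B`
(with the convention `0 · log(junk) = 0` on zero-probability terms). -/
def MI (p : (∀ i, α i) → ℝ) (A B : Finset ι) : ℝ :=
  ∑ w : ∀ i, α i, p w *
    Real.log (margProb p (A ∪ B) w / (margProb p A w * margProb p B w))

/-- Conditional mutual information between collections `A` and `B` given `C`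
(with the convention `0 · log(junk) = 0` on zero-probability terms). -/
def CMI (p : (∀ i, α i) → ℝ) (A B C : Finset ι) : ℝ :=
  ∑ w : (∀ i, α i), p w *
    Real.log ((margProb p (A ∪ B ∪ C) w * margProb p C w) /
      (margProb p (A ∪ C) w * margProb p (B ∪ C) w))


/-- Joint pmf of the collection obtained by replacing, for each `i ∈ N`, the variable
`Z_i` by its ε-noise perturbation `Z_i^ε`: with probability `1 - ε` the perturbed
variable equals `Z_i` and otherwise it equals an independent noise variable with pmf
`q i`; the noise variables and Bernoulli(ε) switching indicators are mutually
independent and jointly independent of all the original variables. -/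
def perturb (p : (∀ i, α i) → ℝ) (N : Finset ι) (ε : ℝ) (q : ∀ i, α i → ℝ) :
    (∀ i, α i) → ℝ :=
  fun w => ∑ w₀ : ∀ i, α i, p w₀ *
    ∏ i : ι,
      if i ∈ N then (1 - ε) * (if w i = w₀ i then 1 else 0) + ε * q i (w i)
      else (if w i = w₀ i then 1 else 0)

def kernelApply (k : ∀ i, α i → α i → ℝ) (g : (∀ i, α i) → ℝ) (x : ∀ i, α i) : ℝ :=
  ∑ z, g z * ∏ i, k i (x i) (z i)

omit [∀ i, DecidableEq (α i)] in
theorem kernelApply_kernelApply (k l : ∀ i, α i → α i → ℝ) (g : (∀ i, α i) → ℝ) :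
    kernelApply k (kernelApply l g) = kernelApply (fun i a c => ∑ b, k i a b * l i b c) g := by
  funext x
  simp only [kernelApply, Finset.sum_mul]
  rw [Finset.sum_comm]
  refine Finset.sum_congr rfl fun z _ => ?_
  simp only [Fintype.prod_sum, Finset.mul_sum, Finset.prod_mul_distrib]
  exact Finset.sum_congr rfl fun w _ => by ring

theorem kernelApply_ite_eq (g : (∀ i, α i) → ℝ) :
    kernelApply (fun i (a b : α i) => if a = b then (1 : ℝ) else 0) g = g := by
  funext x
  simp only [kernelApply, Fintype.prod_boole, ← funext_iff, mul_boole, Finset.sum_ite_eq,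
    Finset.mem_univ, if_true]

def marginalKernel (A : Finset ι) (i : ι) (a b : α i) : ℝ :=
  if i ∈ A then (if b = a then 1 else 0) else 1

theorem margProb_eq_kernelApply (p : (∀ i, α i) → ℝ) (A : Finset ι) :
    margProb p A = kernelApply (marginalKernel A) p := by
  funext x
  refine Finset.sum_congr rfl fun w _ => ?_
  simp only [marginalKernel]
  rw [Finset.prod_ite_mem, Finset.univ_inter, Finset.prod_boole, mul_boole]
  congr

def noiseKernel (N : Finset ι) (ε : ℝ) (q : ∀ i, α i → ℝ) (i : ι) (a b : α i) : ℝ :=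
  if i ∈ N then (1 - ε) * (if a = b then 1 else 0) + ε * q i a else if a = b then 1 else 0

theorem perturb_eq_kernelApply (p : (∀ i, α i) → ℝ) (N : Finset ι) (ε : ℝ)
    (q : ∀ i, α i → ℝ) : perturb p N ε q = kernelApply (noiseKernel N ε q) p := rfl

section Marginals

variable {p : (∀ i, α i) → ℝ}

theorem dependsOn_margProb (p : (∀ i, α i) → ℝ) (A : Finset ι) :
    DependsOn (margProb p A) ↑A := by
  intro x z hxz
  refine Finset.sum_congr rfl fun w _ => if_congr ?_ rfl rfl
  exact forall₂_congr fun i hi => by rw [hxz i hi]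

theorem margProb_nonneg (hp : ∀ w, 0 ≤ p w) (A : Finset ι) (x : ∀ i, α i) :
    0 ≤ margProb p A x :=
  Finset.sum_nonneg fun w _ => by split_ifs <;> simp [hp w]

theorem margProb_anti (hp : ∀ w, 0 ≤ p w) {A B : Finset ι} (hAB : A ⊆ B) (x : ∀ i, α i) :
    margProb p B x ≤ margProb p A x :=
  Finset.sum_le_sum fun w _ => by
    split_ifs with hB hA
    exacts [le_rfl, absurd (fun i hi => hB i (hAB hi)) hA, hp w, le_rfl]

theorem margProb_pos (hp : ∀ w, 0 ≤ p w) {x : ∀ i, α i} (hx : 0 < p x) (A : Finset ι) :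
    0 < margProb p A x :=
  Finset.sum_pos' (fun w _ => by split_ifs <;> simp [hp w])
    ⟨x, Finset.mem_univ x, by simpa using hx⟩

theorem condIndep_iff_forall (hp : ∀ w, 0 ≤ p w) {A B C : Finset ι} :
    CondIndep p A B C ↔ ∀ x, margProb p (A ∪ B ∪ C) x * margProb p C x =
      margProb p (A ∪ C) x * margProb p (B ∪ C) x := by
  refine ⟨fun h x => ?_, fun h x _ => h x⟩
  rcases (margProb_nonneg hp C x).lt_or_eq with hC | hC
  · exact h x hC
  · have hAC : margProb p (A ∪ C) x = 0 :=
      le_antisymm (hC ▸ margProb_anti hp Finset.subset_union_right x) (margProb_nonneg hp _ x)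
    rw [← hC, hAC, mul_zero, zero_mul]

theorem MI_eq_MI_add_CMI (hp : ∀ w, 0 ≤ p w) {A B C : Finset ι} (hCB : C ⊆ B) :
    MI p B A = MI p C A + CMI p A (B \ C) C := by
  rw [MI, MI, CMI, ← Finset.sum_add_distrib]
  refine Finset.sum_congr rfl fun w _ => ?_
  rcases (hp w).eq_or_lt with h0 | hpos
  · simp [← h0]
  have hABC : A ∪ (B \ C) ∪ C = B ∪ A := by
    rw [Finset.union_assoc, Finset.sdiff_union_of_subset hCB, Finset.union_comm]
  rw [hABC, Finset.sdiff_union_of_subset hCB, Finset.union_comm A C, ← mul_add]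
  have h := fun D => (margProb_pos hp hpos D).ne'
  rw [Real.log_div (h _) (mul_ne_zero (h _) (h _)), Real.log_mul (h _) (h _),
    Real.log_div (h _) (mul_ne_zero (h _) (h _)), Real.log_mul (h _) (h _),
    Real.log_div (mul_ne_zero (h _) (h _)) (mul_ne_zero (h _) (h _)),
    Real.log_mul (h _) (h _), Real.log_mul (h _) (h _)]
  ring

theorem CMI_eq_zero_of_condIndep (hp : ∀ w, 0 ≤ p w) {A B C : Finset ι}
    (h : CondIndep p A B C) : CMI p A B C = 0 :=
  Finset.sum_eq_zero fun w _ => by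
    rw [(condIndep_iff_forall hp).1 h w, Real.log_div_self, mul_zero]

end Marginals

section Noise

variable {N : Finset ι} {ε : ℝ} {q : ∀ i, α i → ℝ}

omit [Fintype ι] in
theorem sum_noiseKernel_left {i : ι} (hq : i ∈ N → ∑ v, q i v = 1) (b : α i) :
    ∑ a, noiseKernel N ε q i a b = 1 := by
  by_cases hi : i ∈ N
  · simp [noiseKernel, hi, Finset.sum_add_distrib, ← Finset.mul_sum, hq hi]
  · simp [noiseKernel, hi]

omit [Fintype ι] in
theorem marginalKernel_comp_noiseKernel {A : Finset ι} (hq : ∀ i ∈ N \ A, ∑ v, q i v = 1) :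
    (fun i (a c : α i) => ∑ b, marginalKernel A i a b * noiseKernel N ε q i b c) =
      fun i a c => ∑ b, noiseKernel (N ∩ A) ε q i a b * marginalKernel A i b c := by
  funext i a c
  by_cases hA : i ∈ A
  · simp [marginalKernel, noiseKernel, hA, eq_comm]
  · simp only [marginalKernel, hA, if_false, one_mul, mul_one]
    rw [sum_noiseKernel_left fun hi => hq i (Finset.mem_sdiff.2 ⟨hi, hA⟩)]
    simp [noiseKernel, hA]

theorem perturb_empty (g : (∀ i, α i) → ℝ) : perturb g ∅ ε q = g := by
  have : noiseKernel (∅ : Finset ι) ε q = fun i a b => if a = b then 1 else 0 := by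
    funext i a b
    simp [noiseKernel]
  rw [perturb_eq_kernelApply, this, kernelApply_ite_eq]

theorem margProb_perturb {A : Finset ι} (hq : ∀ i ∈ N \ A, ∑ v, q i v = 1)
    (p : (∀ i, α i) → ℝ) :
    margProb (perturb p N ε q) A = perturb (margProb p A) (N ∩ A) ε q := by
  rw [margProb_eq_kernelApply, margProb_eq_kernelApply, perturb_eq_kernelApply,
    perturb_eq_kernelApply, kernelApply_kernelApply, kernelApply_kernelApply,
    marginalKernel_comp_noiseKernel hq]

theorem margProb_perturb_of_disjoint {A : Finset ι} (hq : ∀ i ∈ N, ∑ v, q i v = 1)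
    (hNA : Disjoint N A) (p : (∀ i, α i) → ℝ) :
    margProb (perturb p N ε q) A = margProb p A := by
  rw [margProb_perturb (fun i hi => hq i (Finset.sdiff_subset hi)),
    Finset.disjoint_iff_inter_eq_empty.1 hNA, perturb_empty]

theorem margProb_perturb_of_subset {A : Finset ι} (hNA : N ⊆ A) (p : (∀ i, α i) → ℝ) :
    margProb (perturb p N ε q) A = perturb (margProb p A) N ε q := by
  rw [margProb_perturb (by simp [Finset.sdiff_eq_empty_iff_subset.2 hNA]),
    Finset.inter_eq_left.2 hNA]

/-- The inverse of the `i`-th noise matrix `(1 - ε) I + ε q 1ᵀ`, by Sherman–Morrison. -/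
def denoiseKernel (N : Finset ι) (ε : ℝ) (q : ∀ i, α i → ℝ) (i : ι) (a b : α i) : ℝ :=
  if i ∈ N then ((if a = b then 1 else 0) - ε * q i a) / (1 - ε) else if a = b then 1 else 0

omit [Fintype ι] in
theorem denoiseKernel_comp_noiseKernel (hε : ε ≠ 1) (hq : ∀ i ∈ N, ∑ v, q i v = 1) :
    (fun i (a c : α i) => ∑ b, denoiseKernel N ε q i a b * noiseKernel N ε q i b c) =
      fun _ a c => if a = c then 1 else 0 := by
  funext i a c
  have hε' : 1 - ε ≠ 0 := sub_ne_zero.2 hε.symm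
  by_cases hi : i ∈ N
  · simp only [denoiseKernel, noiseKernel, hi, if_true, sub_div, sub_mul, Finset.sum_sub_distrib,
      mul_add, Finset.sum_add_distrib, ite_div, zero_div, ite_mul, zero_mul, Finset.sum_ite_eq,
      Finset.sum_ite_eq', Finset.mem_univ, if_true, ← Finset.mul_sum, hq i hi]
    field_simp
    split_ifs <;> ring
  · simp [denoiseKernel, noiseKernel, hi]

theorem perturb_injective (hε : ε ≠ 1) (hq : ∀ i ∈ N, ∑ v, q i v = 1) :
    Function.Injective fun g : (∀ i, α i) → ℝ => perturb g N ε q := by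
  refine Function.LeftInverse.injective (g := kernelApply (denoiseKernel N ε q)) fun g => ?_
  rw [perturb_eq_kernelApply, kernelApply_kernelApply, denoiseKernel_comp_noiseKernel hε hq,
    kernelApply_ite_eq]

omit [∀ i, Fintype (α i)] in
theorem agree_of_prod_noiseKernel_ne_zero {x z : ∀ i, α i}
    (h : ∏ i, noiseKernel N ε q i (x i) (z i) ≠ 0) : ∀ i ∈ (↑N : Set ι)ᶜ, x i = z i := by
  intro i hi
  by_contra hne
  exact h (Finset.prod_eq_zero (Finset.mem_univ i) (by simp_all [noiseKernel]))

theorem perturb_mul_of_dependsOn {h : (∀ i, α i) → ℝ} (hh : DependsOn h (↑N)ᶜ)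
    (g : (∀ i, α i) → ℝ) :
    perturb (fun x => h x * g x) N ε q = fun x => h x * perturb g N ε q x := by
  funext x
  rw [perturb_eq_kernelApply, perturb_eq_kernelApply, kernelApply, kernelApply, Finset.mul_sum]
  refine Finset.sum_congr rfl fun z _ => ?_
  rcases eq_or_ne (∏ i, noiseKernel N ε q i (x i) (z i)) 0 with h0 | h0
  · simp [h0]
  · rw [hh (agree_of_prod_noiseKernel_ne_zero h0), mul_assoc]

theorem sum_perturb (hq : ∀ i ∈ N, ∑ v, q i v = 1) (g : (∀ i, α i) → ℝ) :
    ∑ w, perturb g N ε q w = ∑ w, g w := by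
  rw [perturb_eq_kernelApply]
  simp only [kernelApply]
  rw [Finset.sum_comm]
  refine Finset.sum_congr rfl fun z _ => ?_
  rw [← Finset.mul_sum, ← Fintype.prod_sum (fun i a => noiseKernel N ε q i a (z i)),
    Finset.prod_eq_one fun i _ => sum_noiseKernel_left (hq i) (z i), mul_one]

theorem sum_perturb_mul_of_dependsOn (hq : ∀ i ∈ N, ∑ v, q i v = 1) {G : (∀ i, α i) → ℝ}
    (hG : DependsOn G (↑N)ᶜ) (p : (∀ i, α i) → ℝ) :
    ∑ w, perturb p N ε q w * G w = ∑ w, p w * G w := by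
  calc ∑ w, perturb p N ε q w * G w = ∑ w, perturb (fun x => G x * p x) N ε q w := by
        simp only [perturb_mul_of_dependsOn hG, mul_comm]
    _ = ∑ w, p w * G w := by simp only [sum_perturb hq, mul_comm]

theorem perturb_nonneg {p : (∀ i, α i) → ℝ} (hp : ∀ w, 0 ≤ p w) (hε0 : 0 ≤ ε) (hε1 : ε ≤ 1)
    (hq : ∀ i ∈ N, ∀ v, 0 ≤ q i v) (w : ∀ i, α i) : 0 ≤ perturb p N ε q w := by
  refine Finset.sum_nonneg fun z _ => mul_nonneg (hp z) (Finset.prod_nonneg fun i _ => ?_)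
  split_ifs with hi <;> first | positivity | nlinarith [hq i hi (w i)]

theorem dependsOn_margProb_of_disjoint (p : (∀ i, α i) → ℝ) {A : Finset ι}
    (hNA : Disjoint N A) : DependsOn (margProb p A) (↑N)ᶜ :=
  (dependsOn_margProb p A).mono <|
    Set.subset_compl_iff_disjoint_left.2 (Finset.disjoint_coe.2 hNA)

theorem MI_perturb_of_disjoint (hq : ∀ i ∈ N, ∑ v, q i v = 1) {A B : Finset ι}
    (hNA : Disjoint N A) (hNB : Disjoint N B) (p : (∀ i, α i) → ℝ) :
    MI (perturb p N ε q) A B = MI p A B := by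
  have hNAB : Disjoint N (A ∪ B) := Finset.disjoint_union_right.2 ⟨hNA, hNB⟩
  simp only [MI, margProb_perturb_of_disjoint hq hNAB, margProb_perturb_of_disjoint hq hNA,
    margProb_perturb_of_disjoint hq hNB]
  refine sum_perturb_mul_of_dependsOn hq (fun x z hxz => ?_) p
  rw [dependsOn_margProb_of_disjoint p hNAB hxz, dependsOn_margProb_of_disjoint p hNA hxz,
    dependsOn_margProb_of_disjoint p hNB hxz]

/-- Noise on coordinates of `B` alone only convolves both sides of the factorization identity
defining `A ⊥ B | C` with the same invertible kernel. -/
theorem condIndep_perturb_iff {p : (∀ i, α i) → ℝ} (hp : ∀ w, 0 ≤ p w) (hε0 : 0 ≤ ε)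
    (hε1 : ε < 1) (hq0 : ∀ i ∈ N, ∀ v, 0 ≤ q i v) (hq1 : ∀ i ∈ N, ∑ v, q i v = 1)
    {A B C : Finset ι} (hNA : Disjoint N A) (hNB : N ⊆ B) (hNC : Disjoint N C) :
    CondIndep (perturb p N ε q) A B C ↔ CondIndep p A B C := by
  have hNAC : Disjoint N (A ∪ C) := Finset.disjoint_union_right.2 ⟨hNA, hNC⟩
  have hNABC : N ⊆ A ∪ B ∪ C :=
    hNB.trans (Finset.subset_union_right.trans Finset.subset_union_left)
  have hNBC : N ⊆ B ∪ C := hNB.trans Finset.subset_union_left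
  rw [condIndep_iff_forall (perturb_nonneg hp hε0 hε1.le hq0), condIndep_iff_forall hp,
    margProb_perturb_of_subset hNABC, margProb_perturb_of_subset hNBC,
    margProb_perturb_of_disjoint hq1 hNC, margProb_perturb_of_disjoint hq1 hNAC]
  simp only [mul_comm _ (margProb p C _)]
  rw [← funext_iff, ← funext_iff,
    ← perturb_mul_of_dependsOn (dependsOn_margProb_of_disjoint p hNC),
    ← perturb_mul_of_dependsOn (dependsOn_margProb_of_disjoint p hNAC)]
  exact (perturb_injective hε1.ne hq1).eq_iff

end Noise

variable [∀ i, Nonempty (α i)]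

/-- if `M₀` is a Markov blanket of `Y` within `S`, then after adding
ε-noise (`0 < ε < 1`, noise pmfs everywhere positive) to every variable in `S \ M₀`,
the mutual information is preserved: `MI(S^ε, Y) = MI(S, Y)`; in particular `M₀` remains
a Markov blanket, and if `M₀` was a Markov boundary it remains one. -/
theorem mutual_information_preserved_after_noise_outside_blanket
    (p : (∀ i, α i) → ℝ) (hp : IsDist p)
    (y : ι) (S : Finset ι) (hyS : y ∉ S)
    (M₀ : Finset ι) (hM₀ : MarkovBlanket p y S M₀)
    (ε : ℝ) (hε0 : 0 < ε) (hε1 : ε < 1)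
    (q : ∀ i, α i → ℝ) (hq : ∀ i ∈ S \ M₀, (∀ v, 0 < q i v) ∧ ∑ v, q i v = 1) :
    MI (perturb p (S \ M₀) ε q) S {y} = MI p S {y} ∧
      MarkovBlanket (perturb p (S \ M₀) ε q) y S M₀ ∧
      (MarkovBoundary p y S M₀ → MarkovBoundary (perturb p (S \ M₀) ε q) y S M₀) := by
  obtain ⟨hM₀S, hCI⟩ := hM₀
  have hq0 : ∀ i ∈ S \ M₀, ∀ v, 0 ≤ q i v := fun i hi v => ((hq i hi).1 v).le
  have hq1 : ∀ i ∈ S \ M₀, ∑ v, q i v = 1 := fun i hi => (hq i hi).2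
  have hy : Disjoint (S \ M₀) {y} :=
    Finset.disjoint_singleton_right.2 fun h => hyS (Finset.mem_sdiff.1 h).1
  have hCI_iff : ∀ M ⊆ M₀, CondIndep (perturb p (S \ M₀) ε q) {y} (S \ M) M ↔
      CondIndep p {y} (S \ M) M := fun M hM =>
    condIndep_perturb_iff hp.1 hε0.le hε1 hq0 hq1 hy (Finset.sdiff_subset_sdiff le_rfl hM)
      (Finset.disjoint_of_subset_right hM Finset.sdiff_disjoint)
  have hblanket : MarkovBlanket (perturb p (S \ M₀) ε q) y S M₀ :=
    ⟨hM₀S, (hCI_iff M₀ le_rfl).2 hCI⟩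
  refine ⟨?_, hblanket, fun ⟨_, hmin⟩ =>
    ⟨hblanket, fun M hM hM' => hmin M hM ⟨hM'.1, (hCI_iff M hM.subset).1 hM'.2⟩⟩⟩
  have hp' := perturb_nonneg hp.1 hε0.le hε1.le hq0
  rw [MI_eq_MI_add_CMI hp' hM₀S, MI_eq_MI_add_CMI hp.1 hM₀S,
    CMI_eq_zero_of_condIndep hp' hblanket.2, CMI_eq_zero_of_condIndep hp.1 hCI,
    MI_perturb_of_disjoint hq1 Finset.sdiff_disjoint hy]

end
end

section
/- Let Y be a discrete random variable and S a finite set of discrete random variables with Y ∉ S. Let E = { W ∈ S : Y is not conditionally independent of W given S \ {W} } be the set of essential variables for Y. Then E equals the intersection of all Markov boundaries of Y within S. -/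
open scoped BigOperators

noncomputable section

variable {ι : Type*} [Fintype ι] [DecidableEq ι]
variable {α : ι → Type*} [∀ i, Fintype (α i)] [∀ i, DecidableEq (α i)]

/-! An essential variable `W` lies in every Markov blanket `M`: otherwise weak union turns
`Y ⊥ S \ M | M` into `Y ⊥ W | S \ {W}`. Conversely, if `W ∈ S` is inessential then `S \ {W}`
is a Markov blanket, and a Markov boundary inside it omits `W`. -/

section ConditionalIndependence

variable (p : (∀ i, α i) → ℝ)

lemma margProb_congr {U : Finset ι} {x x' : ∀ i, α i} (h : ∀ i ∈ U, x i = x' i) :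
    margProb p U x = margProb p U x' :=
  Finset.sum_congr rfl fun _ _ => if_congr (forall₂_congr fun i hi => by rw [h i hi]) rfl rfl

lemma margProb_update_of_notMem {b : ι} {U : Finset ι} (hb : b ∉ U) (x : ∀ i, α i) (a : α b) :
    margProb p U (Function.update x b a) = margProb p U x :=
  margProb_congr p fun _ hi => Function.update_of_ne (ne_of_mem_of_not_mem hi hb) _ _

lemma margProb_antitone (hp : ∀ w, 0 ≤ p w) (x : ∀ i, α i) :
    Antitone fun U => margProb p U x := fun U V hUV =>
  Finset.sum_le_sum fun w _ => by
    split_ifs with hV hU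
    exacts [le_rfl, absurd (fun i hi => hV i (hUV hi)) hU, hp w, le_rfl]

lemma sum_margProb_insert_update {b : ι} {U : Finset ι} (hb : b ∉ U) (x : ∀ i, α i) :
    ∑ a : α b, margProb p (insert b U) (Function.update x b a) = margProb p U x := by
  unfold margProb
  rw [Finset.sum_comm]
  refine Finset.sum_congr rfl fun w _ => ?_
  have hU (a : α b) : (∀ i ∈ U, w i = Function.update x b a i) ↔ ∀ i ∈ U, w i = x i :=
    forall₂_congr fun i hi => by rw [Function.update_of_ne (ne_of_mem_of_not_mem hi hb)]
  simp only [Finset.forall_mem_insert, Function.update_self, hU, ite_and, Finset.sum_ite_eq,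
    Finset.mem_univ, if_true]

lemma CondIndep.of_insert {A C D : Finset ι} {b : ι} (hb : b ∉ A ∪ C)
    (h : CondIndep p A (insert b D) C) : CondIndep p A D C := by
  by_cases hbD : b ∈ D
  · rwa [Finset.insert_eq_of_mem hbD] at h
  have hbDC : b ∉ D ∪ C := by simp_all
  have hbADC : b ∉ A ∪ D ∪ C := by simp_all
  have hbC : b ∉ C := by simp_all
  intro x hx
  calc margProb p (A ∪ D ∪ C) x * margProb p C x
      = ∑ a, margProb p (A ∪ insert b D ∪ C) (Function.update x b a) *
          margProb p C (Function.update x b a) := by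
        simp only [margProb_update_of_notMem p hbC, ← Finset.sum_mul, Finset.union_insert,
          Finset.insert_union, sum_margProb_insert_update p hbADC]
    _ = ∑ a, margProb p (A ∪ C) (Function.update x b a) *
          margProb p (insert b D ∪ C) (Function.update x b a) :=
        Finset.sum_congr rfl fun a _ => h _ (by rwa [margProb_update_of_notMem p hbC])
    _ = margProb p (A ∪ C) x * margProb p (D ∪ C) x := by
        simp only [margProb_update_of_notMem p hb, ← Finset.mul_sum, Finset.insert_union,
          sum_margProb_insert_update p hbDC]

lemma CondIndep.decomposition {A B C D : Finset ι} (hB : Disjoint B (A ∪ C))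
    (h : CondIndep p A (B ∪ D) C) : CondIndep p A D C := by
  induction B using Finset.induction_on with
  | empty => simpa using h
  | insert b B hbB ih =>
    rw [Finset.disjoint_insert_left] at hB
    rw [Finset.insert_union] at h
    exact ih hB.2 (h.of_insert p hB.1)

lemma CondIndep.weak_union (hp : ∀ w, 0 ≤ p w) {A B C D : Finset ι} (hB : Disjoint B (A ∪ C))
    (h : CondIndep p A (B ∪ D) C) : CondIndep p A B (C ∪ D) := by
  intro x hCD
  have hC : 0 < margProb p C x :=
    hCD.trans_le (margProb_antitone p hp x Finset.subset_union_left)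
  have h₁ := h x hC
  have h₂ := h.decomposition p hB x hC
  simp only [Finset.union_comm, Finset.union_left_comm] at h₁ h₂ ⊢
  -- after multiplying by `f(C)`, both sides become `f(A ∪ C) f(B ∪ C ∪ D) f(C ∪ D)`
  refine mul_right_cancel₀ hC.ne' ?_
  linear_combination margProb p (C ∪ D) x * h₁ - margProb p (B ∪ (C ∪ D)) x * h₂

end ConditionalIndependence

section MarkovBlanket

variable {p : (∀ i, α i) → ℝ} {y W : ι} {T M : Finset ι}

lemma markovBlanket_self (p : (∀ i, α i) → ℝ) (y : ι) (T : Finset ι) : MarkovBlanket p y T T :=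
  ⟨subset_rfl, fun x _ => by simp⟩

lemma markovBlanket_erase (hWT : W ∈ T) (h : CondIndep p {y} {W} (T.erase W)) :
    MarkovBlanket p y T (T.erase W) :=
  ⟨T.erase_subset W, by rwa [Finset.sdiff_erase_self hWT]⟩

lemma MarkovBlanket.exists_markovBoundary_subset (h : MarkovBlanket p y T M) :
    ∃ M' ⊆ M, MarkovBoundary p y T M' := by
  obtain ⟨M', ⟨hM'M, hM'⟩, hmin⟩ :=
    wellFounded_lt.has_min {M' | M' ⊆ M ∧ MarkovBlanket p y T M'} ⟨M, subset_rfl, h⟩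
  exact ⟨M', hM'M, hM', fun M'' hlt hM'' => hmin M'' ⟨hlt.subset.trans hM'M, hM''⟩ hlt⟩

lemma MarkovBlanket.condIndep_erase_of_notMem (hp : ∀ w, 0 ≤ p w) (h : MarkovBlanket p y T M)
    (hyT : y ∉ T) (hWT : W ∈ T) (hWM : W ∉ M) : CondIndep p {y} {W} (T.erase W) := by
  have hsplit : {W} ∪ (T \ M).erase W = T \ M := by
    rw [Finset.singleton_union, Finset.insert_erase (Finset.mem_sdiff.2 ⟨hWT, hWM⟩)]
  have hrest : M ∪ (T \ M).erase W = T.erase W := by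
    ext i
    have := @h.1 i
    grind
  have hW : Disjoint {W} ({y} ∪ M) := by
    simp only [Finset.disjoint_singleton_left, Finset.mem_union, Finset.mem_singleton, not_or]
    exact ⟨ne_of_mem_of_not_mem hWT hyT, hWM⟩
  rw [← hrest]
  exact (hsplit ▸ h.2).weak_union p hp hW

end MarkovBlanket

variable [∀ i, Nonempty (α i)]

/-- Lemma 5: the set `E` of essential variables for `Y` (those `W ∈ S`
with `Y` not conditionally independent of `W` given `S \ {W}`) equals the intersection
of all Markov boundaries of `Y` within `S`. -/
theorem essential_variables_eq_inter_markov_boundaries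
    (p : (∀ i, α i) → ℝ) (hp : IsDist p)
    (y : ι) (S : Finset ι) (hyS : y ∉ S)
    (E : Finset ι)
    (hE : ∀ W, W ∈ E ↔ W ∈ S ∧ ¬ CondIndep p {y} {W} (S.erase W)) :
    (E : Set ι) = ⋂ M ∈ {M : Finset ι | MarkovBoundary p y S M}, (M : Set ι) := by
  ext W
  simp only [Finset.mem_coe, Set.mem_iInter, Set.mem_ofPred_eq]
  constructor
  · intro hW M hM
    obtain ⟨hWS, hdep⟩ := (hE W).1 hW
    by_contra hWM
    exact hdep (hM.1.condIndep_erase_of_notMem hp.1 hyS hWS hWM)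
  · intro hW
    obtain ⟨M, -, hM⟩ := (markovBlanket_self p y S).exists_markovBoundary_subset
    have hWS : W ∈ S := hM.1.1 (hW M hM)
    refine (hE W).2 ⟨hWS, fun hindep => ?_⟩
    obtain ⟨M', hM'W, hM'⟩ := (markovBlanket_erase hWS hindep).exists_markovBoundary_subset
    exact S.notMem_erase W (hM'W (hW M' hM'))

end
end
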